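/- Let X and Y be complex Banach spaces, A ∈ B(X), B ∈ B(Y), C ∈ B(Y, X), and let M_C ∈ B(X ⊕ Y) be the upper-triangular operator matrix M_C(x, y) = (Ax + Cy, By). Then σ_r(M_C) ∪ S(B) = σ_r(A) ∪ σ_r(B) ∪ S(B), where σ_r denotes the right spectrum and S(B) the set of points where B fails to have the single valued extension property. -/

import Mathlib

/-! Let `S` be a right inverse of `M_C - z₀`. Near `z₀` it extends to an analytic family `S μ`
of right inverses of `M_C - μ`, and the second component of `S μ (x, 0)` is an analytic solution
of `(B - μ) f(μ) = 0`; so if `B` has the SVEP at `z₀` it vanishes, and then the upper-left corner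
of `S` is a right inverse of `A - z₀`. Everything else is block-matrix algebra: right inverses
of `A - z` and `B - z` assemble into one of `M_C - z`, and the lower-right corner of a right
inverse of `M_C - z` is one of `B - z`. -/

noncomputable section

open ContinuousLinearMap Metric Set

variable {E : Type*} [NormedAddCommGroup E] [NormedSpace ℂ E]
variable {X Y : Type*} [NormedAddCommGroup X] [NormedSpace ℂ X] [CompleteSpace X]
  [NormedAddCommGroup Y] [NormedSpace ℂ Y] [CompleteSpace Y]

/-- The right spectrum: points where `T - z` has no right inverse in `B(E)`. -/
def rightSpectrum (T : E →L[ℂ] E) : Set ℂ :=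
  {z | ¬ ∃ S : E →L[ℂ] E, (T - z • 1) * S = 1}

/-- `T` has the single valued extension property at `z₀`. -/
def HasSVEPAt (T : E →L[ℂ] E) (z₀ : ℂ) : Prop :=
  ∃ r > (0 : ℝ), ∀ V : Set ℂ, V ⊆ ball z₀ r → IsOpen V →
    ∀ f : ℂ → E, AnalyticOnNhd ℂ f V → (∀ z ∈ V, (T - z • 1) (f z) = 0) →
      ∀ z ∈ V, f z = 0

/-- `S(T)`: the set of points where `T` fails to have the SVEP. -/
def svepFail (T : E →L[ℂ] E) : Set ℂ :=
  {z | ¬ HasSVEPAt T z}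

/-- The upper-triangular operator matrix `M_C (x, y) = (A x + C y, B y)` on `X ⊕ Y`. -/
def ucMat (A : X →L[ℂ] X) (B : Y →L[ℂ] Y) (C : Y →L[ℂ] X) :
    (X × Y) →L[ℂ] (X × Y) :=
  (A.comp (ContinuousLinearMap.fst ℂ X Y) + C.comp (ContinuousLinearMap.snd ℂ X Y)).prod
    (B.comp (ContinuousLinearMap.snd ℂ X Y))

section RightInverse

variable {𝕜 R : Type*} [NontriviallyNormedField 𝕜] [NormedRing R] [NormedAlgebra 𝕜 R]
  [CompleteSpace R]

/-- The family is `μ ↦ s (1 - (μ - z₀) s)⁻¹`, because `(a - μ) s = 1 - (μ - z₀) s`. -/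
theorem exists_analyticOnNhd_rightInverse_sub_smul {a s : R} {z₀ : 𝕜}
    (h : (a - z₀ • 1) * s = 1) :
    ∃ ε > 0, ∃ g : 𝕜 → R, AnalyticOnNhd 𝕜 g (ball z₀ ε) ∧ g z₀ = s ∧
      ∀ μ ∈ ball z₀ ε, (a - μ • 1) * g μ = 1 := by
  have hunit : ∀ μ ∈ ball z₀ (‖s‖ + 1)⁻¹, IsUnit (1 - (μ - z₀) • s) := by
    intro μ hμ
    have hμ' : ‖μ - z₀‖ * (‖s‖ + 1) < 1 := by
      rwa [mem_ball, dist_eq_norm, ← one_div, lt_div_iff₀ (by positivity)] at hμ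
    have hnorm : ‖(μ - z₀) • s‖ < 1 := by
      calc ‖(μ - z₀) • s‖ ≤ ‖μ - z₀‖ * ‖s‖ := norm_smul_le _ _
        _ ≤ ‖μ - z₀‖ * (‖s‖ + 1) := by gcongr; linarith
        _ < 1 := hμ'
    exact (Units.oneSub _ hnorm).isUnit
  refine ⟨(‖s‖ + 1)⁻¹, by positivity, fun μ => s * Ring.inverse (1 - (μ - z₀) • s), ?_, ?_, ?_⟩
  · intro μ hμ
    have hinv := analyticAt_inverse (𝕜 := 𝕜) (hunit μ hμ).unit
    rw [IsUnit.unit_spec] at hinv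
    exact analyticAt_const.mul <| hinv.comp (f := fun μ => 1 - (μ - z₀) • s) <| by fun_prop
  · simp
  · intro μ hμ
    have hshift : (a - μ • 1) * s = 1 - (μ - z₀) • s := by
      rw [show a - μ • 1 = (a - z₀ • 1) - (μ - z₀) • 1 by module, sub_mul, h, smul_one_mul]
    rw [← mul_assoc, hshift]
    exact Ring.mul_inverse_cancel _ (hunit μ hμ)

end RightInverse

theorem HasSVEPAt.eq_zero_of_analyticOnNhd {T : E →L[ℂ] E} {z₀ : ℂ} (hT : HasSVEPAt T z₀)
    {ε : ℝ} (hε : 0 < ε) {f : ℂ → E} (hf : AnalyticOnNhd ℂ f (ball z₀ ε))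
    (hTf : ∀ μ ∈ ball z₀ ε, (T - μ • 1) (f μ) = 0) : f z₀ = 0 := by
  obtain ⟨r, hr, hT⟩ := hT
  have hsub : ball z₀ (min r ε) ⊆ ball z₀ ε := ball_subset_ball (min_le_right _ _)
  exact hT _ (ball_subset_ball (min_le_left _ _)) isOpen_ball f (hf.mono hsub)
    (fun μ hμ => hTf μ (hsub hμ)) z₀ (mem_ball_self (lt_min hr hε))

section UpperTriangular

variable {U V : Type*} [NormedAddCommGroup U] [NormedSpace ℂ U] [NormedAddCommGroup V]
  [NormedSpace ℂ V]

@[simp]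
theorem ucMat_apply (A : U →L[ℂ] U) (B : V →L[ℂ] V) (C : V →L[ℂ] U) (p : U × V) :
    ucMat A B C p = (A p.1 + C p.2, B p.2) := rfl

theorem ucMat_sub_smul_one (A : U →L[ℂ] U) (B : V →L[ℂ] V) (C : V →L[ℂ] U) (z : ℂ) :
    ucMat A B C - z • 1 = ucMat (A - z • 1) (B - z • 1) C := by
  ext p <;> simp

theorem ucMat_mul_ucMat (A A' : U →L[ℂ] U) (B B' : V →L[ℂ] V) (C C' : V →L[ℂ] U) :
    ucMat A B C * ucMat A' B' C' = ucMat (A * A') (B * B') (A ∘L C' + C ∘L B') := by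
  ext p <;> simp

theorem ucMat_one_one_zero : ucMat (1 : U →L[ℂ] U) (1 : V →L[ℂ] V) 0 = 1 := by
  ext p <;> simp

theorem exists_ucMat_mul_eq_one {A : U →L[ℂ] U} {B : V →L[ℂ] V} (C : V →L[ℂ] U)
    (hA : ∃ SA, A * SA = 1) (hB : ∃ SB, B * SB = 1) : ∃ S, ucMat A B C * S = 1 := by
  obtain ⟨SA, hSA⟩ := hA
  obtain ⟨SB, hSB⟩ := hB
  refine ⟨ucMat SA SB (-(SA ∘L C ∘L SB)), ?_⟩
  rw [ucMat_mul_ucMat, hSA, hSB, comp_neg, ← comp_assoc, ← mul_def, hSA, ← ucMat_one_one_zero]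
  congr
  rw [one_def, id_comp, neg_add_cancel]

theorem exists_mul_eq_one_of_ucMat_mul_eq_one (A : U →L[ℂ] U) {B : V →L[ℂ] V} (C : V →L[ℂ] U)
    (h : ∃ S, ucMat A B C * S = 1) : ∃ SB, B * SB = 1 := by
  obtain ⟨S, hS⟩ := h
  refine ⟨snd ℂ U V ∘L S ∘L inr ℂ U V, ?_⟩
  ext y
  simpa using congr(($hS (0, y)).2)

theorem mul_fst_comp_comp_inl_eq_one_of_ucMat {A : U →L[ℂ] U} {B : V →L[ℂ] V} {C : V →L[ℂ] U}
    {S : U × V →L[ℂ] U × V} (hS : ucMat A B C * S = 1) (hS₀ : ∀ x, (S (x, 0)).2 = 0) :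
    A * (fst ℂ U V ∘L S ∘L inl ℂ U V) = 1 := by
  ext x
  simpa [hS₀] using congr(($hS (x, 0)).1)

end UpperTriangular

theorem snd_apply_inl_eq_zero_of_hasSVEPAt {A : X →L[ℂ] X} {B : Y →L[ℂ] Y} {C : Y →L[ℂ] X}
    {z₀ : ℂ} {S : X × Y →L[ℂ] X × Y} (hS : (ucMat A B C - z₀ • 1) * S = 1)
    (hB : HasSVEPAt B z₀) (x : X) : (S (x, 0)).2 = 0 := by
  obtain ⟨ε, hε, g, hg, hgS, hgM⟩ := exists_analyticOnNhd_rightInverse_sub_smul hS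
  let evalSnd : (X × Y →L[ℂ] X × Y) →L[ℂ] Y := snd ℂ X Y ∘L apply ℂ (X × Y) (x, 0)
  have hBg : ∀ μ ∈ ball z₀ ε, (B - μ • 1) (evalSnd (g μ)) = 0 := by
    intro μ hμ
    have hsnd := congr(($(hgM μ hμ) (x, 0)).2)
    simpa [evalSnd, ucMat_sub_smul_one] using hsnd
  simpa [evalSnd, hgS] using
    hB.eq_zero_of_analyticOnNhd hε (fun μ hμ => evalSnd.analyticAt _ |>.comp (hg μ hμ)) hBg

theorem exists_mul_eq_one_of_ucMat_of_hasSVEPAt (A : X →L[ℂ] X) {B : Y →L[ℂ] Y} (C : Y →L[ℂ] X)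
    {z : ℂ} (hM : ∃ S, (ucMat A B C - z • 1) * S = 1) (hB : HasSVEPAt B z) :
    ∃ SA, (A - z • 1) * SA = 1 := by
  obtain ⟨S, hS⟩ := hM
  have hS₀ := snd_apply_inl_eq_zero_of_hasSVEPAt hS hB
  rw [ucMat_sub_smul_one] at hS
  exact ⟨_, mul_fst_comp_comp_inl_eq_one_of_ucMat hS hS₀⟩

theorem stmt9 (A : X →L[ℂ] X) (B : Y →L[ℂ] Y) (C : Y →L[ℂ] X) :
    rightSpectrum (ucMat A B C) ∪ svepFail B =
      rightSpectrum A ∪ rightSpectrum B ∪ svepFail B := by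
  ext z
  have hM := exists_ucMat_mul_eq_one (A := A - z • 1) (B := B - z • 1) C
  have hB := exists_mul_eq_one_of_ucMat_mul_eq_one (A - z • 1) (B := B - z • 1) C
  have hA := exists_mul_eq_one_of_ucMat_of_hasSVEPAt A (B := B) C (z := z)
  simp only [mem_union, rightSpectrum, svepFail, mem_ofPred_eq, ucMat_sub_smul_one] at *
  tauto
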